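/- Let (b_n) be a nondecreasing sequence of integers with b_n ≥ 2 and b_n → ∞, let X = ∏_n ℤ(b_n), let u_n be the character of X given by u_n(ω) = exp(2πi a_n / b_n) for ω = (a_n) ∈ X, and let G_u = s_u(X) = {ω ∈ X : u_n(ω) → 1} be equipped with the metric ρ(x, y) = d(x, y) + sup_n |u_n(x) − u_n(y)|. Then every continuous character χ of (G_u, ρ) is given by an element of the direct sum G = ⨁_n ℤ(b_n): writing χ as a sequence (c_n) ∈ ∏_n ℤ(b_n) via χ(ω) = exp(2πi Σ_n c_n a_n / b_n) on G, one has c_n = 0 for all sufficiently large n. Thus the character group of G_u is algebraically isomorphic to ⨁_n ℤ(b_n). -/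

import Mathlib

/-!
On the finitely supported elements, which form `⨁ n, ℤ(b n)`, a character `χ` is determined by
its restrictions to the cyclic factors, so `χ ω = 𝐞 (∑ n, c n * ω n / b n)` for a sequence `c`.
Suppose `c n ≠ 0` infinitely often and let `c' n ∈ (-b n / 2, b n / 2]` represent `c n`. Adding
`sign (c' n)` to the `n`-th coordinate moves the phase `∑ n, c' n * k n / b n` up by
`|c' n| / b n ≤ 1 / 2`, and about `η * b n` such steps keep `‖u_n - 1‖ ≤ 2πη`. As `b n → ∞`
these moves add up to infinity, so walking through the coordinates beyond `N` the phase first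
enters `[1/4, 3/4]` at some `ω` with `ρ(0, ω)` small, while `Re (χ ω) ≤ 0`: this contradicts the
continuity of `χ` at `0`.
-/

open Filter Topology

/-- The value at `ω ∈ X = ∏ n, ℤ(b n)` of the character given by the generator of the `n`-th
summand of `⨁ n, ℤ(b n)`: `u_n(ω) = exp(2πi a_n / b_n)` where `a_n = (ω n).val`. -/
noncomputable def prodChar (b : ℕ → ℕ) (m : ℕ) (ω : (n : ℕ) → ZMod (b n)) : ℂ :=
  Complex.exp (2 * Real.pi * Complex.I * ((ω m).val : ℂ) / (b m : ℂ))

/-- The standard metric of `X = ∏ n, ℤ(b n)`: `d(x, y) = 2⁻ⁿ` where `n` is the first index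
at which the coordinates of `x` and `y` differ (and `d(x, x) = 0`). -/
noncomputable def prodStdDist (b : ℕ → ℕ) (x y : (n : ℕ) → ZMod (b n)) : ℝ :=
  open scoped Classical in
  if x = y then 0 else (2 : ℝ)⁻¹ ^ sInf {n : ℕ | x n ≠ y n}

/-- The subgroup `s_u(X) = {ω : u_n(ω) → 1}` of `X = ∏ n, ℤ(b n)`. -/
def sUX (b : ℕ → ℕ) : Set ((n : ℕ) → ZMod (b n)) :=
  {ω | Tendsto (fun n => prodChar b n ω) atTop (𝓝 1)}

/-- The Polish group metric `ρ(x, y) = d(x, y) + sup_n |u_n(x) − u_n(y)|` on `s_u(X)`. -/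
noncomputable def prodRho (b : ℕ → ℕ) (x y : (n : ℕ) → ZMod (b n)) : ℝ :=
  prodStdDist b x y + ⨆ n : ℕ, ‖prodChar b n x - prodChar b n y‖

open scoped Real FourierTransform

lemma AddChar.map_finset_sum {ι A M : Type*} [AddCommMonoid A] [CommMonoid M] (ψ : AddChar A M)
    (s : Finset ι) (f : ι → A) : ψ (∑ i ∈ s, f i) = ∏ i ∈ s, ψ (f i) := by
  simpa only [← ofAdd_sum, AddChar.toMonoidHom_apply, toAdd_ofAdd] using
    map_prod ψ.toMonoidHom (fun i => Multiplicative.ofAdd (f i)) s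

lemma AddChar.exists_zmod_eq_fourierChar {N : ℕ} [NeZero N] (ψ : AddChar (ZMod N) ℂ) :
    ∃ c : ZMod N, ∀ c' k : ℤ, (c' : ZMod N) = c → ψ k = 𝐞 (c' * k / N) := by
  obtain ⟨c, rfl⟩ := AddChar.zmodAddEquiv.surjective ψ
  refine ⟨c, ?_⟩
  rintro c' k rfl
  change ((AddChar.zmod N c' k : Circle) : ℂ) = _
  simp [Real.fourierChar_apply', mul_div_assoc]

lemma Real.norm_fourierChar_sub_one_le (x : ℝ) : ‖(𝐞 x : ℂ) - 1‖ ≤ 2 * π * |x| := by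
  have := Real.norm_exp_I_mul_ofReal_sub_one_le (x := 2 * π * x)
  rw [Real.fourierChar_apply, mul_comm _ Complex.I]
  simpa [abs_mul, abs_of_pos Real.pi_pos] using this

lemma Real.one_le_norm_fourierChar_sub_one_of_mem_Icc {x : ℝ} (hx : x ∈ Set.Icc (1 / 4 : ℝ) (3 / 4)) :
    1 ≤ ‖(𝐞 x : ℂ) - 1‖ := by
  have hcos : Real.cos (2 * π * x) ≤ 0 :=
    Real.cos_nonpos_of_pi_div_two_le_of_le (by nlinarith [hx.1, Real.pi_pos])
      (by nlinarith [hx.2, Real.pi_pos])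
  have hre : ((𝐞 x : ℂ) - 1).re = Real.cos (2 * π * x) - 1 := by
    rw [Complex.sub_re, Real.fourierChar_apply, Complex.exp_ofReal_mul_I_re, Complex.one_re]
  calc (1 : ℝ) ≤ |Real.cos (2 * π * x) - 1| := by rw [abs_of_nonpos (by linarith)]; linarith
    _ ≤ ‖(𝐞 x : ℂ) - 1‖ := hre ▸ Complex.abs_re_le_norm _

lemma exists_lt_le_succ {α : Type*} [LinearOrder α] {f : ℕ → α} {a : α} (h0 : f 0 < a)
    (h : ∃ n, a ≤ f n) : ∃ n, f n < a ∧ a ≤ f (n + 1) := by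
  obtain ⟨n, hn⟩ := h
  induction n with
  | zero => exact absurd hn (not_le.2 h0)
  | succ n ih =>
    by_cases hn' : a ≤ f n
    · exact ih hn'
    · exact ⟨n, not_le.1 hn', hn⟩

open Finset in
lemma exists_sum_mul_mem_Ico {y : ℕ → ℝ} {L : ℕ → ℕ} {a s : ℝ} (ha : 0 < a)
    (hy0 : ∀ n, 0 ≤ y n) (hys : ∀ n, y n ≤ s) (hL : ¬Summable fun n => L n * y n) :
    ∃ (K : ℕ → ℕ) (p : ℕ), (∀ n, K n ≤ L n) ∧ (∀ n, p ≤ n → K n = 0) ∧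
      ∑ n ∈ range p, K n * y n ∈ Set.Ico a (a + s) := by
  set F : ℕ → ℝ := fun q => ∑ n ∈ range q, L n * y n
  have hF : Tendsto F atTop atTop :=
    (not_summable_iff_tendsto_nat_atTop_of_nonneg fun n => by have := hy0 n; positivity).1 hL
  obtain ⟨p, hp, hp'⟩ := exists_lt_le_succ (f := F) (by simpa [F] using ha)
    (hF.eventually_ge_atTop a).exists
  set g : ℕ → ℝ := fun m => F p + m * y p
  have hgL : g (L p) = F (p + 1) := by simp [g, F, sum_range_succ]
  obtain ⟨m, hm, hm'⟩ := exists_lt_le_succ (f := g) (by simpa [g] using hp) ⟨L p, hgL ▸ hp'⟩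
  have hmL : m + 1 ≤ L p := by
    by_contra h
    have : g (L p) ≤ g m := by
      have := hy0 p
      simp only [g]
      gcongr
      omega
    linarith
  let K : ℕ → ℕ := fun n => if n < p then L n else if n = p then m + 1 else 0
  have hK : ∑ n ∈ range (p + 1), (K n : ℝ) * y n = g (m + 1) := by
    rw [sum_range_succ]
    simp only [K, g, F, if_neg (lt_irrefl p)]
    congr 1
    exact sum_congr rfl fun n hn => by rw [if_pos (mem_range.1 hn)]
  refine ⟨K, p + 1, fun n => ?_, fun n hn => ?_, hK ▸ ⟨hm', ?_⟩⟩
  · simp only [K]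
    split_ifs with h₁ h₂
    exacts [le_rfl, h₂ ▸ hmL, Nat.zero_le _]
  · simp only [K]
    rw [if_neg (by omega), if_neg (by omega)]
  · have : g (m + 1) = g m + y p := by simp only [g]; push_cast; ring
    linarith [hys p]

lemma half_le_floor_mul_mul_abs_div {η : ℝ} {B : ℕ} {c : ℤ} (hη : 0 < η) (hc : c ≠ 0)
    (hB : 2 ≤ η * B) : η / 2 ≤ ⌊η * B⌋₊ * (|(c : ℝ)| / B) := by
  have hB0 : 0 < (B : ℝ) := pos_of_mul_pos_right (by linarith) hη.le
  have hfloor : η * B / 2 ≤ ⌊η * B⌋₊ := by linarith [Nat.lt_floor_add_one (η * B)]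
  have hc1 : 1 / (B : ℝ) ≤ |(c : ℝ)| / B :=
    div_le_div_of_nonneg_right (by exact_mod_cast Int.one_le_abs hc) hB0.le
  calc η / 2 = η * B / 2 * (1 / B) := by field_simp
    _ ≤ ⌊η * B⌋₊ * (|(c : ℝ)| / B) := by gcongr

open Finset in
lemma exists_int_sum_div_mem_Icc {b : ℕ → ℕ} {c : ℕ → ℤ} (hc : ∀ n, 2 * |c n| ≤ b n)
    (hfreq : ∃ᶠ n in atTop, c n ≠ 0) {η : ℝ} (hη : 0 < η) {N : ℕ}
    (hN : ∀ n ≥ N, 2 ≤ η * b n) :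
    ∃ (k : ℕ → ℤ) (p : ℕ), (∀ n < N, k n = 0) ∧ (∀ n, p ≤ n → k n = 0) ∧
      (∀ n, |(k n : ℝ)| ≤ η * b n) ∧
      ∑ n ∈ range p, (c n * k n / b n : ℝ) ∈ Set.Icc (1 / 4) (3 / 4) := by
  set L : ℕ → ℕ := fun n => if N ≤ n then ⌊η * b n⌋₊ else 0
  set y : ℕ → ℝ := fun n => |(c n : ℝ)| / b n
  have hL : ∀ n, (L n : ℝ) ≤ η * b n := fun n => by
    simp only [L]
    split_ifs
    · exact Nat.floor_le (by positivity)
    · simp only [CharP.cast_eq_zero]; positivity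
  have hy : ∀ n, y n ≤ 1 / 2 := fun n => by
    have : 2 * |(c n : ℝ)| ≤ b n := by exact_mod_cast hc n
    exact div_le_of_le_mul₀ (by positivity) (by norm_num) (by linarith)
  have hdiv : ¬Summable fun n => L n * y n := by
    intro hsum
    have hlarge : ∃ᶠ n in atTop, η / 2 ≤ L n * y n :=
      (hfreq.and_eventually (eventually_ge_atTop N)).mono fun n ⟨hcn, hn⟩ => by
        simpa only [L, if_pos hn] using half_le_floor_mul_mul_abs_div hη hcn (hN n hn)
    obtain ⟨n, hn, hn'⟩ := (hlarge.and_eventually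
      (hsum.tendsto_atTop_zero.eventually_lt_const (half_pos hη))).exists
    exact hn.not_gt hn'
  obtain ⟨K, p, hKL, hKp, hsum⟩ := exists_sum_mul_mem_Ico (by norm_num : (0 : ℝ) < 1 / 4)
    (fun n => by positivity) hy hdiv
  refine ⟨fun n => (c n).sign * K n, p, fun n hn => ?_, fun n hn => by simp [hKp n hn],
    fun n => ?_, ?_⟩
  · have : K n = 0 := Nat.le_zero.1 ((hKL n).trans (by simp [L, hn.not_ge]))
    simp [this]
  · calc |(((c n).sign * K n : ℤ) : ℝ)| ≤ K n := by
          obtain h | h | h := (c n).sign_trichotomy <;> simp [h]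
      _ ≤ L n := by exact_mod_cast hKL n
      _ ≤ η * b n := hL n
  · have hterm : ∀ n, (c n * ((c n).sign * K n : ℤ) / b n : ℝ) = K n * y n := fun n => by
      rw [Int.cast_mul, ← mul_assoc, mul_comm (c n : ℝ), ← Int.cast_mul,
        Int.sign_mul_self_eq_abs, Int.cast_abs, Int.cast_natCast]
      ring
    simp only [hterm]
    exact ⟨hsum.1, by linarith [hsum.2]⟩

-- Quantifying over all integer lifts `c'` of `c` and `k` of `ω` lets the phase be read off both
-- with `ZMod.val` and with the signed representatives `ZMod.valMinAbs`.
def CharCoeffs (b : ℕ → ℕ) (χ : ((n : ℕ) → ZMod (b n)) → ℂ) (c : (n : ℕ) → ZMod (b n)) : Prop :=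
  ∀ (c' k : ℕ → ℤ) (s : Finset ℕ), (∀ n, (c' n : ZMod (b n)) = c n) → (∀ n ∉ s, k n = 0) →
    χ (fun n => (k n : ZMod (b n))) = 𝐞 (∑ n ∈ s, c' n * k n / b n)

section

variable {b : ℕ → ℕ}

lemma prodChar_eq_toCircle {m : ℕ} [NeZero (b m)] (ω : (n : ℕ) → ZMod (b n)) :
    prodChar b m ω = ZMod.toCircle (ω m) :=
  (ZMod.toCircle_apply _).symm

lemma prodChar_intCast {m : ℕ} [NeZero (b m)] {ω : (n : ℕ) → ZMod (b n)} {k : ℤ}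
    (h : ω m = k) : prodChar b m ω = 𝐞 (k / b m) := by
  rw [prodChar_eq_toCircle, h, ZMod.toCircle_intCast, Real.fourierChar_apply]
  push_cast
  ring_nf

lemma prodChar_of_eq_zero {m : ℕ} {ω : (n : ℕ) → ZMod (b n)} (h : ω m = 0) :
    prodChar b m ω = 1 := by
  simp [prodChar, h]

lemma mem_sUX_of_finite {ω : (n : ℕ) → ZMod (b n)} (h : {n | ω n ≠ 0}.Finite) : ω ∈ sUX b := by
  refine tendsto_const_nhds.congr' ?_
  filter_upwards [Nat.cofinite_eq_atTop ▸ h.eventually_cofinite_notMem] with n hn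
  exact (prodChar_of_eq_zero (not_not.1 hn)).symm

lemma prodStdDist_le_of_forall_lt_eq {x y : (n : ℕ) → ZMod (b n)} {N : ℕ}
    (h : ∀ m < N, x m = y m) : prodStdDist b x y ≤ 2⁻¹ ^ N := by
  classical
  unfold prodStdDist
  split_ifs with hxy
  · positivity
  · obtain ⟨m, hm⟩ := Function.ne_iff.1 hxy
    refine pow_le_pow_of_le_one (by norm_num) (by norm_num) (le_csInf ⟨m, hm⟩ fun n hn => ?_)
    by_contra hlt
    exact hn (h n (not_le.1 hlt))

lemma prodRho_zero_le {ω : (n : ℕ) → ZMod (b n)} {N : ℕ} {r : ℝ} (hN : ∀ m < N, ω m = 0)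
    (hr : ∀ m, ‖1 - prodChar b m ω‖ ≤ r) : prodRho b 0 ω ≤ 2⁻¹ ^ N + r :=
  add_le_add (prodStdDist_le_of_forall_lt_eq fun m hm => (hN m hm).symm)
    (ciSup_le fun m => by rw [prodChar_of_eq_zero (ω := 0) (m := m) rfl]; exact hr m)

lemma prodRho_zero_intCast_le [∀ n, NeZero (b n)] {k : ℕ → ℤ} {N : ℕ} {η : ℝ} (hη : 0 ≤ η)
    (hkN : ∀ m < N, k m = 0) (hk : ∀ m, |(k m : ℝ)| ≤ η * b m) :
    prodRho b 0 (fun n => (k n : ZMod (b n))) ≤ 2⁻¹ ^ N + 2 * π * η := by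
  refine prodRho_zero_le (fun m hm => by simp [hkN m hm]) fun m => ?_
  rw [prodChar_intCast rfl, norm_sub_rev]
  calc ‖(𝐞 (k m / b m) : ℂ) - 1‖ ≤ 2 * π * |(k m / b m : ℝ)| := Real.norm_fourierChar_sub_one_le _
    _ ≤ 2 * π * η := by
      rw [abs_div, Nat.abs_cast]
      gcongr
      exact div_le_of_le_mul₀ (by positivity) hη (hk m)

variable (b) [∀ n, NeZero (b n)]

def sUXAddSubmonoid : AddSubmonoid ((n : ℕ) → ZMod (b n)) where
  carrier := sUX b
  zero_mem' := mem_sUX_of_finite (by simp)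
  add_mem' {x y} hx hy := by
    simpa [sUX, prodChar_eq_toCircle, AddChar.map_add_eq_mul] using hx.mul hy

def sUXSingle (n : ℕ) : ZMod (b n) →+ sUXAddSubmonoid b :=
  (AddMonoidHom.single (fun n => ZMod (b n)) n).codRestrict (sUXAddSubmonoid b) fun x =>
    mem_sUX_of_finite ((Set.finite_singleton n).subset fun m hm => by
      by_contra h; exact hm (Pi.single_eq_of_ne (Set.mem_singleton_iff.not.1 h) _))

@[simp]
lemma coe_sUXSingle (n : ℕ) (x : ZMod (b n)) :
    (sUXSingle b n x : (m : ℕ) → ZMod (b m)) = Pi.single n x :=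
  rfl

variable {b}

def sUXAddChar (χ : ((n : ℕ) → ZMod (b n)) → ℂ) (h0 : χ 0 = 1)
    (hhom : ∀ x ∈ sUX b, ∀ y ∈ sUX b, χ (x + y) = χ x * χ y) : AddChar (sUXAddSubmonoid b) ℂ where
  toFun x := χ x
  map_zero_eq_one' := h0
  map_add_eq_mul' x y := hhom x x.2 y y.2

theorem exists_charCoeffs (χ : ((n : ℕ) → ZMod (b n)) → ℂ) (h0 : χ 0 = 1)
    (hhom : ∀ x ∈ sUX b, ∀ y ∈ sUX b, χ (x + y) = χ x * χ y) : ∃ c, CharCoeffs b χ c := by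
  set ψ := sUXAddChar χ h0 hhom
  choose c hc using fun n => (ψ.compAddMonoidHom (sUXSingle b n)).exists_zmod_eq_fourierChar
  refine ⟨c, fun c' k s hc' hk => ?_⟩
  have hω : (fun n => (k n : ZMod (b n))) = ((∑ n ∈ s, sUXSingle b n (k n) : sUXAddSubmonoid b) :
      (n : ℕ) → ZMod (b n)) := by
    ext m
    rw [AddSubmonoid.coe_finsetSum, Finset.sum_apply]
    simp only [coe_sUXSingle, Finset.sum_pi_single]
    split_ifs with hm
    · rfl
    · simp [hk m hm]
  calc χ (fun n => (k n : ZMod (b n))) = ψ (∑ n ∈ s, sUXSingle b n (k n)) := by rw [hω]; rfl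
    _ = ∏ n ∈ s, (𝐞 (c' n * k n / b n) : ℂ) := by
      rw [ψ.map_finset_sum]
      exact Finset.prod_congr rfl fun n _ => hc n (c' n) (k n) (hc' n)
    _ = 𝐞 (∑ n ∈ s, c' n * k n / b n) := by
      rw [AddChar.map_finset_sum]
      exact (map_prod Circle.coeHom (fun n => 𝐞 (c' n * k n / b n)) s).symm

theorem CharCoeffs.eventually_eq_zero (htends : Tendsto b atTop atTop)
    {χ : ((n : ℕ) → ZMod (b n)) → ℂ} {c : (n : ℕ) → ZMod (b n)} (hc : CharCoeffs b χ c)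
    (hcont : ∃ δ > 0, ∀ ω ∈ sUX b, prodRho b 0 ω < δ → ‖χ ω - 1‖ < 1) :
    ∃ N, ∀ n ≥ N, c n = 0 := by
  by_contra hne
  have hfreq : ∃ᶠ n in atTop, (c n).valMinAbs ≠ 0 := by
    simpa [Filter.frequently_atTop, ZMod.valMinAbs_eq_zero] using hne
  obtain ⟨δ, hδ, hχδ⟩ := hcont
  set η := δ / (4 * π)
  have hη : 0 < η := by positivity
  obtain ⟨N, hN⟩ : ∃ N, ∀ n ≥ N, 2 ≤ η * b n ∧ (2⁻¹ : ℝ) ^ n < δ / 2 :=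
    eventually_atTop.1 <|
      (((tendsto_natCast_atTop_atTop.comp htends).const_mul_atTop hη).eventually_ge_atTop 2).and
        ((tendsto_pow_atTop_nhds_zero_of_lt_one (by norm_num) (by norm_num)).eventually_lt_const
          (by positivity))
  obtain ⟨k, p, hkN, hkp, hkη, hphase⟩ := exists_int_sum_div_mem_Icc
    (c := fun n => (c n).valMinAbs)
    (fun n => by have := ZMod.natAbs_valMinAbs_le (c n); rw [Int.abs_eq_natAbs]; omega)
    hfreq hη fun n hn => (hN n hn).1
  set ω : (n : ℕ) → ZMod (b n) := fun n => (k n : ZMod (b n))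
  have hχω := hc _ k (Finset.range p) (fun n => ZMod.coe_valMinAbs _)
    fun n hn => hkp n (by simpa using hn)
  have hmem : ω ∈ sUX b := mem_sUX_of_finite <| (Finset.range p).finite_toSet.subset fun n hn => by
    by_contra h
    exact hn (by simp [ω, hkp n (by simpa using h)])
  have hρ : prodRho b 0 ω < δ := by
    have h2πη : 2 * π * η = δ / 2 := by simp only [η]; field_simp; ring
    linarith [prodRho_zero_intCast_le hη.le hkN hkη, (hN N le_rfl).2]
  exact (hχδ ω hmem hρ).not_ge (hχω ▸ Real.one_le_norm_fourierChar_sub_one_of_mem_Icc hphase)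

lemma CharCoeffs.apply_eq_exp_finsum {χ : ((n : ℕ) → ZMod (b n)) → ℂ} {c : (n : ℕ) → ZMod (b n)}
    (hc : CharCoeffs b χ c) {ω : (n : ℕ) → ZMod (b n)} (hω : {n : ℕ | ω n ≠ 0}.Finite) :
    χ ω = Complex.exp (2 * Real.pi * Complex.I *
      ((∑ᶠ n : ℕ, (((c n).val : ℝ) * ((ω n).val : ℝ) / (b n : ℝ)) : ℝ) : ℂ)) := by
  have h := hc (fun n => (c n).val) (fun n => (ω n).val) hω.toFinset (fun n => by simp)
    fun n hn => by
      rw [Set.Finite.mem_toFinset, Set.mem_ofPred_eq, not_not] at hn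
      simp [hn]
  have hsupp : Function.support (fun n => ((c n).val : ℝ) * (ω n).val / b n) ⊆ hω.toFinset :=
    fun n hn => by
      rw [Set.Finite.coe_toFinset, Set.mem_ofPred_eq]
      rintro h
      simp [h] at hn
  simp only [Int.cast_natCast, ZMod.natCast_zmod_val] at h
  rw [h, finsum_eq_sum_of_support_subset _ hsupp, Real.fourierChar_apply]
  push_cast
  ring_nf

end

theorem character_of_Gu_eq_directSum_eval_general
    (b : ℕ → ℕ) (hb : ∀ n, 2 ≤ b n)
    (htends : Tendsto b atTop atTop)
    (χ : ((n : ℕ) → ZMod (b n)) → ℂ)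
    (hnorm : ∀ ω ∈ sUX b, ‖χ ω‖ = 1)
    (hhom : ∀ x ∈ sUX b, ∀ y ∈ sUX b, χ (x + y) = χ x * χ y)
    (hcont : ∀ x ∈ sUX b, ∀ ε > (0 : ℝ), ∃ δ > (0 : ℝ), ∀ y ∈ sUX b,
      prodRho b x y < δ → ‖χ y - χ x‖ < ε) :
    ∃ c : (n : ℕ) → ZMod (b n), (∃ N : ℕ, ∀ n ≥ N, c n = 0) ∧
      ∀ ω : (n : ℕ) → ZMod (b n), {n : ℕ | ω n ≠ 0}.Finite →
        χ ω = Complex.exp (2 * Real.pi * Complex.I *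
          ((∑ᶠ n : ℕ, (((c n).val : ℝ) * ((ω n).val : ℝ) / (b n : ℝ)) : ℝ) : ℂ)) := by
  have : ∀ n, NeZero (b n) := fun n => ⟨by have := hb n; omega⟩
  have h0 : (0 : (n : ℕ) → ZMod (b n)) ∈ sUX b := (sUXAddSubmonoid b).zero_mem
  have hχ0 : χ 0 = 1 := by
    have hne : χ 0 ≠ 0 := fun h => by simpa [h] using hnorm 0 h0
    simpa [hne] using hhom 0 h0 0 h0
  obtain ⟨c, hc⟩ := exists_charCoeffs χ hχ0 hhom
  obtain ⟨δ, hδ, hχδ⟩ := hcont 0 h0 1 one_pos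
  exact ⟨c, hc.eventually_eq_zero htends ⟨δ, hδ, fun ω hω hρ => hχ0 ▸ hχδ ω hω hρ⟩,
    fun ω hω => hc.apply_eq_exp_finsum hω⟩

/-- Every continuous character `χ` of `G_u = (s_u(X), ρ)` (a circle-valued homomorphism on
`s_u(X)`, continuous for the metric `ρ`) is given by an element of the direct sum
`⨁ n, ℤ(b n)`: writing `χ` on the finitely supported elements as
`χ(ω) = exp(2πi Σ_n c_n a_n / b_n)` for a sequence `(c_n) ∈ ∏ n, ℤ(b n)`, one has `c_n = 0`
for all sufficiently large `n`. Hence the character group of `G_u` is algebraically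
isomorphic to `⨁ n, ℤ(b n)`. -/
theorem character_of_Gu_eq_directSum_eval
    (b : ℕ → ℕ) (hmono : Monotone b) (hb : ∀ n, 2 ≤ b n)
    (htends : Tendsto b atTop atTop)
    (χ : ((n : ℕ) → ZMod (b n)) → ℂ)
    (hnorm : ∀ ω ∈ sUX b, ‖χ ω‖ = 1)
    (hhom : ∀ x ∈ sUX b, ∀ y ∈ sUX b, χ (x + y) = χ x * χ y)
    (hcont : ∀ x ∈ sUX b, ∀ ε > (0 : ℝ), ∃ δ > (0 : ℝ), ∀ y ∈ sUX b,
      prodRho b x y < δ → ‖χ y - χ x‖ < ε) :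
    ∃ c : (n : ℕ) → ZMod (b n), (∃ N : ℕ, ∀ n ≥ N, c n = 0) ∧
      ∀ ω : (n : ℕ) → ZMod (b n), {n : ℕ | ω n ≠ 0}.Finite →
        χ ω = Complex.exp (2 * Real.pi * Complex.I *
          ((∑ᶠ n : ℕ, (((c n).val : ℝ) * ((ω n).val : ℝ) / (b n : ℝ)) : ℝ) : ℂ)) :=
  character_of_Gu_eq_directSum_eval_general b hb htends χ hnorm hhom hcont
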